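/- If there exists a graph homomorphism from a finite simple graph G to a finite simple graph H, then α°(G) ≤ α°(H). -/

import Mathlib

open SimpleGraph

/-- A monotonic cycle with respect to an ordering relation `lt`:
a nonempty list of distinct vertices, strictly increasing w.r.t. `lt`,
and if it has length at least 2, consecutive vertices are adjacent and
the last vertex is adjacent to the first. -/
def MonoCycle {V : Type*} (G : SimpleGraph V) (lt : V → V → Prop) (l : List V) : Prop :=
  l ≠ [] ∧ l.Nodup ∧ l.Chain' lt ∧
    (2 ≤ l.length → l.Chain' G.Adj ∧
      ∀ a b, l.head? = some a → l.getLast? = some b → G.Adj b a)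

/-- The maximum length of a monotonic cycle for the ordering relation `lt`. -/
noncomputable def maxCycleLen {V : Type*} (G : SimpleGraph V) (lt : V → V → Prop) : ℕ :=
  sSup {m | ∃ l : List V, MonoCycle G lt l ∧ l.length = m}

/-- The circular altitude of a graph: the minimum over all linear orderings
(injections of the vertex set into `ℕ`) of the maximum length of a monotonic cycle. -/
noncomputable def circAlt {V : Type*} (G : SimpleGraph V) : ℕ :=
  sInf {n | ∃ f : V → ℕ, Function.Injective f ∧
    maxCycleLen G (fun a b => f a < f b) = n}

/-!
Pull back an optimal ordering `g` of `W` along `f`, breaking ties inside the fibres of `f`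
arbitrarily. Adjacent vertices of `G` have distinct images, so consecutive vertices of a monotonic
cycle of `G` land strictly increasing in `g`; hence `f` maps it to a monotonic cycle of `H` of the
same length.
-/

theorem List.IsChain.and {α : Type*} {R S : α → α → Prop} {l : List α}
    (hR : l.IsChain R) (hS : l.IsChain S) : l.IsChain (fun a b => R a b ∧ S a b) :=
  List.isChain_iff_getElem.mpr fun i hi =>
    ⟨List.isChain_iff_getElem.mp hR i hi, List.isChain_iff_getElem.mp hS i hi⟩

theorem exists_injective_nat_refining {V : Type*} [Finite V] (h : V → ℕ) :
    ∃ F : V → ℕ, Function.Injective F ∧ ∀ u v, F u < F v → h u ≤ h v := by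
  let e := Finite.equivFin V
  let F : V → ℕ := fun v => Nat.card V * h v + e v
  have hdiv : ∀ v, F v / Nat.card V = h v := fun v => by
    rw [Nat.mul_add_div (e v).pos, Nat.div_eq_of_lt (e v).isLt, add_zero]
  have hmod : ∀ v, F v % Nat.card V = e v := fun v => by
    rw [Nat.mul_add_mod, Nat.mod_eq_of_lt (e v).isLt]
  refine ⟨F, fun u v huv => e.injective (Fin.ext ?_), fun u v huv => ?_⟩
  · rw [← hmod u, ← hmod v, huv]
  · rw [← hdiv u, ← hdiv v]
    exact Nat.div_le_div_right huv.le

section MonoCycle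

variable {V W : Type*} {G : SimpleGraph V} {H : SimpleGraph W}

theorem MonoCycle.length_le_card [Finite W] {lt : W → W → Prop} {l : List W}
    (hl : MonoCycle H lt l) : l.length ≤ Nat.card W := by
  have := Fintype.ofFinite W
  rw [Nat.card_eq_fintype_card]
  exact hl.2.1.length_le_card

theorem MonoCycle.map {lt : V → V → Prop} {g : W → ℕ} (φ : G →g H)
    (hφ : ∀ a b, lt a b → G.Adj a b → g (φ a) < g (φ b)) {l : List V}
    (hl : MonoCycle G lt l) : MonoCycle H (fun a b => g a < g b) (l.map φ) := by
  obtain ⟨hne, -, hlt, hcyc⟩ := hl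
  by_cases hlen : 2 ≤ l.length
  swap
  · obtain ⟨a, rfl⟩ : ∃ a, l = [a] :=
      List.length_eq_one_iff.mp (by have := List.length_pos_iff.mpr hne; omega)
    exact ⟨by simp, by simp, List.isChain_singleton _, by simp⟩
  obtain ⟨hadj, hlast⟩ := hcyc hlen
  have hchain : (l.map φ).IsChain (fun a b => g a < g b) :=
    List.isChain_map_of_isChain φ (fun a b h => hφ a b h.1 h.2) (hlt.and hadj)
  have hnodup : (l.map φ).Nodup :=
    (((List.isChain_map g).mpr hchain).pairwise.nodup).of_map g
  refine ⟨by simpa using hne, hnodup, hchain, fun _ => ⟨?_, ?_⟩⟩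
  · exact (List.isChain_map φ).mpr (hadj.imp fun _ _ => φ.map_adj)
  · intro a b ha hb
    rw [List.head?_map, Option.map_eq_some_iff] at ha
    rw [List.getLast?_map, Option.map_eq_some_iff] at hb
    obtain ⟨a, ha, rfl⟩ := ha
    obtain ⟨b, hb, rfl⟩ := hb
    exact φ.map_adj (hlast a b ha hb)

theorem maxCycleLen_le_of_hom [Finite W] {lt : V → V → Prop} {g : W → ℕ} (φ : G →g H)
    (hφ : ∀ a b, lt a b → G.Adj a b → g (φ a) < g (φ b)) :
    maxCycleLen G lt ≤ maxCycleLen H (fun a b => g a < g b) := by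
  refine csSup_le_csSup' ⟨Nat.card W, ?_⟩ ?_
  · rintro m ⟨l, hl, rfl⟩
    exact hl.length_le_card
  · rintro m ⟨l, hl, rfl⟩
    exact ⟨l.map φ, hl.map φ hφ, l.length_map φ⟩

end MonoCycle

theorem circAlt_le_maxCycleLen {V : Type*} (G : SimpleGraph V) {F : V → ℕ}
    (hF : Function.Injective F) : circAlt G ≤ maxCycleLen G (fun a b => F a < F b) :=
  Nat.sInf_le ⟨F, hF, rfl⟩

theorem exists_maxCycleLen_eq_circAlt {W : Type*} [Countable W] (H : SimpleGraph W) :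
    ∃ g : W → ℕ, Function.Injective g ∧ maxCycleLen H (fun a b => g a < g b) = circAlt H := by
  obtain ⟨g, hg⟩ := exists_injective_nat W
  exact Nat.sInf_mem (s := {n | ∃ g : W → ℕ, Function.Injective g ∧
    maxCycleLen H (fun a b => g a < g b) = n}) ⟨_, g, hg, rfl⟩

/-- If there is a graph homomorphism from `G` to `H`, then `α°(G) ≤ α°(H)`. -/
theorem circAlt_le_of_hom {V W : Type*} [Finite V] [Finite W]
    (G : SimpleGraph V) (H : SimpleGraph W) (f : G →g H) :
    circAlt G ≤ circAlt H := by
  obtain ⟨g, hg, hgH⟩ := exists_maxCycleLen_eq_circAlt H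
  obtain ⟨F, hF, hFg⟩ := exists_injective_nat_refining (g ∘ f)
  have hf : ∀ a b, F a < F b → G.Adj a b → g (f a) < g (f b) := fun a b hlt hab =>
    (hFg a b hlt).lt_of_ne (hg.ne (f.map_adj hab).ne)
  calc circAlt G ≤ maxCycleLen G (fun a b => F a < F b) := circAlt_le_maxCycleLen G hF
    _ ≤ maxCycleLen H (fun a b => g a < g b) := maxCycleLen_le_of_hom f hf
    _ = circAlt H := hgH
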